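/- arXiv:2008.03643 — 5 statements merged into one kernel-verified Lean document; each statement's English description precedes it below -/
import Mathlib

section
/- Let u: X→Y, u': X'→Y', f: X→X', g: Y→Y' be morphisms in T with g∘u = u'∘f, and let X →u Y →v Z →w ΣX and X' →u' Y' →v' Z' →w' ΣX' be distinguished triangles. Then there exists a morphism k: Y→X' with k∘u = f and u'∘k = g if and only if v'∘g = 0 and (Σf)∘w = 0 (so that (f,g,0) is a map of triangles) and the map of triangles (f,g,0) is good. -/
open CategoryTheory Category Limits Pretriangulated

universe v u

variable {C : Type u} [Category.{v} C] [Preadditive C] [HasZeroObject C]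
  [HasShift C ℤ] [∀ n : ℤ, (shiftFunctor C n).Additive] [Pretriangulated C]
  [IsTriangulated C] [HasBinaryBiproducts C]

noncomputable local instance (n : ℤ) : PreservesBinaryBiproducts (shiftFunctor C n) :=
  preservesBinaryBiproducts_of_preservesBiproducts _

/-- The condition that `(f, g, h)` is a morphism of triangles from `T` to `T'`. -/
def IsTriMap (T T' : Triangle C) (f : T.obj₁ ⟶ T'.obj₁) (g : T.obj₂ ⟶ T'.obj₂)
    (h : T.obj₃ ⟶ T'.obj₃) : Prop :=
  T.mor₁ ≫ g = f ≫ T'.mor₁ ∧ T.mor₂ ≫ h = g ≫ T'.mor₂ ∧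
    T.mor₃ ≫ f⟦(1 : ℤ)⟧' = h ≫ T'.mor₃

/-- The mapping cone of a morphism of triangles. -/
noncomputable def mappingCone (T T' : Triangle C) (f : T.obj₁ ⟶ T'.obj₁)
    (g : T.obj₂ ⟶ T'.obj₂) (h : T.obj₃ ⟶ T'.obj₃) : Triangle C :=
  Triangle.mk
    (biprod.desc (biprod.lift T'.mor₁ 0) (biprod.lift g (-T.mor₂)) :
      T'.obj₁ ⊞ T.obj₂ ⟶ T'.obj₂ ⊞ T.obj₃)
    (biprod.desc (biprod.lift T'.mor₂ 0) (biprod.lift h (-T.mor₃)) :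
      T'.obj₂ ⊞ T.obj₃ ⟶ T'.obj₃ ⊞ T.obj₁⟦(1 : ℤ)⟧)
    (biprod.desc (biprod.lift T'.mor₃ 0)
        (biprod.lift (f⟦(1 : ℤ)⟧') (-(T.mor₁⟦(1 : ℤ)⟧'))) ≫
      ((shiftFunctor C (1 : ℤ)).mapBiprod T'.obj₁ T.obj₂).inv)

/-- A morphism of triangles is good if its mapping cone is distinguished. -/
noncomputable def IsGood (T T' : Triangle C) (f : T.obj₁ ⟶ T'.obj₁)
    (g : T.obj₂ ⟶ T'.obj₂) (h : T.obj₃ ⟶ T'.obj₃) : Prop :=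
  mappingCone T T' f g h ∈ distTriang C

/-- An octahedron on composable maps `a`, `b`, given distinguished triangles
`(a, p₁, q₁)`, `(b, p₂, q₂)` and `(a ≫ b, p₃, q₃)`, is a pair `(m, n)` as below. -/
def IsOctahedron {A₁ A₂ A₃ B₁ B₂ B₃ : C} (a : A₁ ⟶ A₂) (b : A₂ ⟶ A₃)
    (p₁ : A₂ ⟶ B₁) (q₁ : B₁ ⟶ A₁⟦(1 : ℤ)⟧)
    (p₂ : A₃ ⟶ B₂) (q₂ : B₂ ⟶ A₂⟦(1 : ℤ)⟧)
    (p₃ : A₃ ⟶ B₃) (q₃ : B₃ ⟶ A₁⟦(1 : ℤ)⟧)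
    (m : B₁ ⟶ B₃) (n : B₃ ⟶ B₂) : Prop :=
  p₁ ≫ m = b ≫ p₃ ∧ m ≫ q₃ = q₁ ∧ p₃ ≫ n = p₂ ∧ n ≫ q₂ = q₃ ≫ a⟦(1 : ℤ)⟧' ∧
    (Triangle.mk m n (q₂ ≫ p₁⟦(1 : ℤ)⟧') ∈ distTriang C)

/-- A morphism of triangles `(f, g, h)` is Verdier good if `h` arises from Verdier's
construction via two octahedra on the composite `g ∘ u = u' ∘ f`. -/
def IsVerdierGood (T T' : Triangle C) (f : T.obj₁ ⟶ T'.obj₁) (g : T.obj₂ ⟶ T'.obj₂)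
    (h : T.obj₃ ⟶ T'.obj₃) : Prop :=
  ∃ (A Y'' X'' : C) (vt : T'.obj₂ ⟶ A) (wt : A ⟶ T.obj₁⟦(1 : ℤ)⟧)
    (g' : T'.obj₂ ⟶ Y'') (g'' : Y'' ⟶ T.obj₂⟦(1 : ℤ)⟧)
    (f' : T'.obj₁ ⟶ X'') (f'' : X'' ⟶ T.obj₁⟦(1 : ℤ)⟧)
    (α₁ : T.obj₃ ⟶ A) (β₁ : A ⟶ Y'') (α₂ : X'' ⟶ A) (β₂ : A ⟶ T'.obj₃),
    (Triangle.mk (T.mor₁ ≫ g) vt wt ∈ distTriang C) ∧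
    (Triangle.mk g g' g'' ∈ distTriang C) ∧
    (Triangle.mk f f' f'' ∈ distTriang C) ∧
    IsOctahedron T.mor₁ g T.mor₂ T.mor₃ g' g'' vt wt α₁ β₁ ∧
    IsOctahedron f T'.mor₁ f' f'' T'.mor₂ T'.mor₃ vt wt α₂ β₂ ∧
    h = α₁ ≫ β₂

/-- The morphism of triangles `(f, g, h)` is nullhomotopic, in the (equivalent)
`Σ`-applied formulation of the first equation. -/
def IsNullHomotopic (T T' : Triangle C) (f : T.obj₁ ⟶ T'.obj₁) (g : T.obj₂ ⟶ T'.obj₂)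
    (h : T.obj₃ ⟶ T'.obj₃) : Prop :=
  ∃ (F : T.obj₂ ⟶ T'.obj₁) (G : T.obj₃ ⟶ T'.obj₂) (H : T.obj₁⟦(1 : ℤ)⟧ ⟶ T'.obj₃),
    f⟦(1 : ℤ)⟧' = T.mor₁⟦(1 : ℤ)⟧' ≫ F⟦(1 : ℤ)⟧' + H ≫ T'.mor₃ ∧
    g = T.mor₂ ≫ G + F ≫ T'.mor₁ ∧
    h = T.mor₃ ≫ H + G ≫ T'.mor₂

/-- A triangle is contractible if its identity morphism is nullhomotopic. -/
def IsContractible (T : Triangle C) : Prop :=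
  IsNullHomotopic T T (𝟙 T.obj₁) (𝟙 T.obj₂) (𝟙 T.obj₃)

/-- A morphism of triangles is middling good if it extends to a 4 × 4 diagram. -/
def IsMiddlingGood (T T' : Triangle C) (f : T.obj₁ ⟶ T'.obj₁) (g : T.obj₂ ⟶ T'.obj₂)
    (h : T.obj₃ ⟶ T'.obj₃) : Prop :=
  ∃ (X'' Y'' Z'' : C)
    (f' : T'.obj₁ ⟶ X'') (f'' : X'' ⟶ T.obj₁⟦(1 : ℤ)⟧)
    (g' : T'.obj₂ ⟶ Y'') (g'' : Y'' ⟶ T.obj₂⟦(1 : ℤ)⟧)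
    (h' : T'.obj₃ ⟶ Z'') (h'' : Z'' ⟶ T.obj₃⟦(1 : ℤ)⟧)
    (u'' : X'' ⟶ Y'') (v'' : Y'' ⟶ Z'') (w'' : Z'' ⟶ X''⟦(1 : ℤ)⟧),
    (Triangle.mk f f' f'' ∈ distTriang C) ∧
    (Triangle.mk g g' g'' ∈ distTriang C) ∧
    (Triangle.mk h h' h'' ∈ distTriang C) ∧
    (Triangle.mk u'' v'' w'' ∈ distTriang C) ∧
    T'.mor₁ ≫ g' = f' ≫ u'' ∧
    T'.mor₂ ≫ h' = g' ≫ v'' ∧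
    T'.mor₃ ≫ f'⟦(1 : ℤ)⟧' = h' ≫ w'' ∧
    u'' ≫ g'' = f'' ≫ T.mor₁⟦(1 : ℤ)⟧' ∧
    v'' ≫ h'' = g'' ≫ T.mor₂⟦(1 : ℤ)⟧' ∧
    h'' ≫ T.mor₃⟦(1 : ℤ)⟧' = -(w'' ≫ f''⟦(1 : ℤ)⟧')

/-- A candidate triangle `(a, b, c)` is replaceably exact if each of its three maps
can be replaced to give a distinguished triangle. -/
def ReplaceablyExact {A B D : C} (a : A ⟶ B) (b : B ⟶ D) (c : D ⟶ A⟦(1 : ℤ)⟧) : Prop :=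
  (∃ a' : A ⟶ B, Triangle.mk a' b c ∈ distTriang C) ∧
  (∃ b' : B ⟶ D, Triangle.mk a b' c ∈ distTriang C) ∧
  (∃ c' : D ⟶ A⟦(1 : ℤ)⟧, Triangle.mk a b c' ∈ distTriang C)

set_option linter.unusedSectionVars false in
lemma my_biprodTriangle_distinguished {X₁ Y₁ Z₁ X₂ Y₂ Z₂ : C}
    (a₁ : X₁ ⟶ Y₁) (b₁ : Y₁ ⟶ Z₁) (c₁ : Z₁ ⟶ X₁⟦(1:ℤ)⟧)
    (a₂ : X₂ ⟶ Y₂) (b₂ : Y₂ ⟶ Z₂) (c₂ : Z₂ ⟶ X₂⟦(1:ℤ)⟧)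
    (h₁ : Triangle.mk a₁ b₁ c₁ ∈ distTriang C)
    (h₂ : Triangle.mk a₂ b₂ c₂ ∈ distTriang C) :
    Triangle.mk (biprod.map a₁ a₂) (biprod.map b₁ b₂)
      (biprod.map c₁ c₂ ≫ ((shiftFunctor C (1:ℤ)).mapBiprod X₁ X₂).inv) ∈ distTriang C := by
  obtain ⟨W, f₂, f₃, hW⟩ := distinguished_cocone_triangle (biprod.map a₁ a₂)
  obtain ⟨p₃, hp₂, hp₃⟩ : ∃ p₃ : W ⟶ Z₁, f₂ ≫ p₃ = biprod.fst ≫ b₁ ∧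
      f₃ ≫ (shiftFunctor C (1:ℤ)).map biprod.fst = p₃ ≫ c₁ :=
    complete_distinguished_triangle_morphism
      (Triangle.mk (biprod.map a₁ a₂) f₂ f₃) (Triangle.mk a₁ b₁ c₁) hW h₁
      biprod.fst biprod.fst (by exact biprod.map_fst a₁ a₂)
  obtain ⟨q₃, hq₂, hq₃⟩ : ∃ q₃ : W ⟶ Z₂, f₂ ≫ q₃ = biprod.snd ≫ b₂ ∧
      f₃ ≫ (shiftFunctor C (1:ℤ)).map biprod.snd = q₃ ≫ c₂ :=
    complete_distinguished_triangle_morphism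
      (Triangle.mk (biprod.map a₁ a₂) f₂ f₃) (Triangle.mk a₂ b₂ c₂) hW h₂
      biprod.snd biprod.snd (by exact biprod.map_snd a₁ a₂)
  have hcomm₂ : f₂ ≫ biprod.lift p₃ q₃ = biprod.map b₁ b₂ := by
    apply biprod.hom_ext
    · simpa using hp₂
    · simpa using hq₂
  have hcomm₃ : f₃ = biprod.lift p₃ q₃ ≫
      (biprod.map c₁ c₂ ≫ ((shiftFunctor C (1:ℤ)).mapBiprod X₁ X₂).inv) := by
    rw [← cancel_mono ((shiftFunctor C (1:ℤ)).mapBiprod X₁ X₂).hom]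
    apply biprod.hom_ext
    · simp only [assoc, Iso.inv_hom_id_assoc]
      simp only [Functor.mapBiprod_hom, biprod.lift_fst, biprod.map_fst, biprod.lift_fst_assoc]
      exact hp₃
    · simp only [assoc, Iso.inv_hom_id_assoc]
      simp only [Functor.mapBiprod_hom, biprod.lift_snd, biprod.map_snd, biprod.lift_snd_assoc]
      exact hq₃
  have hiso : IsIso (biprod.lift p₃ q₃) := by
    apply isIso_of_yoneda_map_bijective
    intro A
    constructor
    · intro x₁ x₂ hx
      dsimp at hx
      have hx' : (x₁ - x₂) ≫ biprod.lift p₃ q₃ = 0 := by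
        rw [Preadditive.sub_comp]; exact sub_eq_zero_of_eq hx
      have hxp : (x₁ - x₂) ≫ p₃ = 0 := by
        have := hx' =≫ biprod.fst; simpa using this
      have hxq : (x₁ - x₂) ≫ q₃ = 0 := by
        have := hx' =≫ biprod.snd; simpa using this
      have e1 : (x₁ - x₂) ≫ f₃ ≫ (shiftFunctor C (1:ℤ)).map biprod.fst = 0 := by
        rw [hp₃, ← assoc, hxp, zero_comp]
      have e2 : (x₁ - x₂) ≫ f₃ ≫ (shiftFunctor C (1:ℤ)).map biprod.snd = 0 := by
        rw [hq₃, ← assoc, hxq, zero_comp]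
      have hxf₃ : (x₁ - x₂) ≫ f₃ = 0 := by
        rw [← cancel_mono ((shiftFunctor C (1:ℤ)).mapBiprod X₁ X₂).hom, zero_comp,
          Functor.mapBiprod_hom]
        apply biprod.hom_ext
        · simpa only [assoc, biprod.lift_fst, zero_comp] using e1
        · simpa only [assoc, biprod.lift_snd, zero_comp] using e2
      obtain ⟨z, hz⟩ : ∃ z : A ⟶ Y₁ ⊞ Y₂, x₁ - x₂ = z ≫ f₂ :=
        Triangle.coyoneda_exact₃ _ hW (x₁ - x₂) hxf₃
      have hzb : z ≫ biprod.map b₁ b₂ = 0 := by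
        rw [← hcomm₂, ← assoc, ← hz, hx']
      have hz₁ : (z ≫ biprod.fst) ≫ b₁ = 0 := by
        have := hzb =≫ biprod.fst; simpa [assoc] using this
      have hz₂ : (z ≫ biprod.snd) ≫ b₂ = 0 := by
        have := hzb =≫ biprod.snd; simpa [assoc] using this
      obtain ⟨r₁, hr₁⟩ : ∃ r : A ⟶ X₁, z ≫ biprod.fst = r ≫ a₁ :=
        Triangle.coyoneda_exact₂ _ h₁ (z ≫ biprod.fst) hz₁
      obtain ⟨r₂, hr₂⟩ : ∃ r : A ⟶ X₂, z ≫ biprod.snd = r ≫ a₂ :=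
        Triangle.coyoneda_exact₂ _ h₂ (z ≫ biprod.snd) hz₂
      have hzr : z = biprod.lift r₁ r₂ ≫ biprod.map a₁ a₂ := by
        apply biprod.hom_ext
        · simpa using hr₁
        · simpa using hr₂
      have hzero : biprod.map a₁ a₂ ≫ f₂ = 0 := comp_distTriang_mor_zero₁₂ _ hW
      have : x₁ - x₂ = 0 := by
        rw [hz, hzr, assoc, hzero, comp_zero]
      exact sub_eq_zero.mp this
    · intro y
      dsimp at y ⊢
      have z1 : c₁ ≫ (a₁⟦(1:ℤ)⟧') = 0 := comp_distTriang_mor_zero₃₁ _ h₁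
      have z2 : c₂ ≫ (a₂⟦(1:ℤ)⟧') = 0 := comp_distTriang_mor_zero₃₁ _ h₂
      have hccomp : biprod.map c₁ c₂ ≫ biprod.map (a₁⟦(1:ℤ)⟧') (a₂⟦(1:ℤ)⟧') = 0 := by
        apply biprod.hom_ext' <;> simp [reassoc_of% z1, reassoc_of% z2, z1, z2]
      have nat : ((shiftFunctor C (1:ℤ)).mapBiprod X₁ X₂).inv ≫ (biprod.map a₁ a₂)⟦(1:ℤ)⟧' =
          biprod.map (a₁⟦(1:ℤ)⟧') (a₂⟦(1:ℤ)⟧') ≫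
            ((shiftFunctor C (1:ℤ)).mapBiprod Y₁ Y₂).inv := by
        rw [Functor.mapBiprod_inv, Functor.mapBiprod_inv]
        apply biprod.hom_ext' <;> simp [← Functor.map_comp]
      have hτ : (y ≫ biprod.map c₁ c₂ ≫ ((shiftFunctor C (1:ℤ)).mapBiprod X₁ X₂).inv) ≫
          (biprod.map a₁ a₂)⟦(1:ℤ)⟧' = 0 := by
        rw [assoc, assoc, nat, ← assoc (biprod.map c₁ c₂), hccomp]
        rw [zero_comp, comp_zero]
      obtain ⟨x₀, hx₀⟩ : ∃ x₀ : A ⟶ W,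
          y ≫ biprod.map c₁ c₂ ≫ ((shiftFunctor C (1:ℤ)).mapBiprod X₁ X₂).inv = x₀ ≫ f₃ :=
        Triangle.coyoneda_exact₂ _
          (rot_of_distTriang _ (rot_of_distTriang _ hW))
          (y ≫ biprod.map c₁ c₂ ≫ ((shiftFunctor C (1:ℤ)).mapBiprod X₁ X₂).inv) (by
            have hmor : (Triangle.mk (biprod.map a₁ a₂) f₂ f₃).rotate.rotate.mor₂ =
                -((biprod.map a₁ a₂)⟦(1:ℤ)⟧') := rfl
            rw [hmor]
            refine (Preadditive.comp_neg _ _).trans (neg_eq_zero.mpr ?_)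
            exact hτ)
      have hd0 : ((x₀ ≫ biprod.lift p₃ q₃ - y) ≫
          (biprod.map c₁ c₂ ≫ ((shiftFunctor C (1:ℤ)).mapBiprod X₁ X₂).inv)) = 0 := by
        rw [Preadditive.sub_comp, assoc, ← hcomm₃, ← hx₀, sub_self]
      have hd' : (x₀ ≫ biprod.lift p₃ q₃ - y) ≫ biprod.map c₁ c₂ = 0 := by
        have h := hd0
        rw [← assoc] at h
        exact (cancel_mono ((shiftFunctor C (1:ℤ)).mapBiprod X₁ X₂).inv).mp
          (by rw [zero_comp]; exact h)
      have hd₁ : ((x₀ ≫ biprod.lift p₃ q₃ - y) ≫ biprod.fst) ≫ c₁ = 0 := by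
        have := hd' =≫ biprod.fst; simpa [assoc] using this
      have hd₂ : ((x₀ ≫ biprod.lift p₃ q₃ - y) ≫ biprod.snd) ≫ c₂ = 0 := by
        have := hd' =≫ biprod.snd; simpa [assoc] using this
      obtain ⟨e₁, he₁⟩ : ∃ e : A ⟶ Y₁,
          (x₀ ≫ biprod.lift p₃ q₃ - y) ≫ biprod.fst = e ≫ b₁ :=
        Triangle.coyoneda_exact₃ _ h₁ _ hd₁
      obtain ⟨e₂, he₂⟩ : ∃ e : A ⟶ Y₂,
          (x₀ ≫ biprod.lift p₃ q₃ - y) ≫ biprod.snd = e ≫ b₂ :=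
        Triangle.coyoneda_exact₃ _ h₂ _ hd₂
      have hde : x₀ ≫ biprod.lift p₃ q₃ - y = biprod.lift e₁ e₂ ≫ biprod.map b₁ b₂ := by
        apply biprod.hom_ext
        · simpa using he₁
        · simpa using he₂
      refine ⟨x₀ - biprod.lift e₁ e₂ ≫ f₂, ?_⟩
      show (x₀ - biprod.lift e₁ e₂ ≫ f₂) ≫ biprod.lift p₃ q₃ = y
      rw [Preadditive.sub_comp, assoc, hcomm₂, ← hde]
      abel
  refine isomorphic_distinguished _ hW _ ?_
  refine Triangle.isoMk _ _ (Iso.refl _) (Iso.refl _) (asIso (biprod.lift p₃ q₃)).symm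
    ?_ ?_ ?_
  · exact (comp_id _).trans (id_comp _).symm
  · show biprod.map b₁ b₂ ≫ inv (biprod.lift p₃ q₃) = 𝟙 (Y₁ ⊞ Y₂) ≫ f₂
    rw [id_comp, ← hcomm₂, assoc]
    simp only [Iso.symm_hom, asIso_inv, IsIso.hom_inv_id, comp_id]
  · show (biprod.map c₁ c₂ ≫ ((shiftFunctor C (1:ℤ)).mapBiprod X₁ X₂).inv) ≫
      (shiftFunctor C (1:ℤ)).map (𝟙 (X₁ ⊞ X₂)) = inv (biprod.lift p₃ q₃) ≫ f₃
    rw [CategoryTheory.Functor.map_id, comp_id, hcomm₃, IsIso.inv_hom_id_assoc]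

theorem stmt_0 {X Y Z X' Y' Z' : C}
    (u : X ⟶ Y) (v : Y ⟶ Z) (w : Z ⟶ X⟦(1 : ℤ)⟧)
    (u' : X' ⟶ Y') (v' : Y' ⟶ Z') (w' : Z' ⟶ X'⟦(1 : ℤ)⟧)
    (hT : Triangle.mk u v w ∈ distTriang C)
    (hT' : Triangle.mk u' v' w' ∈ distTriang C)
    (f : X ⟶ X') (g : Y ⟶ Y') (hcomm : u ≫ g = f ≫ u') :
    (∃ k : Y ⟶ X', u ≫ k = f ∧ k ≫ u' = g) ↔
      (g ≫ v' = 0 ∧ w ≫ f⟦(1 : ℤ)⟧' = 0 ∧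
        IsGood (Triangle.mk u v w) (Triangle.mk u' v' w') f g 0) := by
  have hT'' : Triangle.mk (-v) (-w) (-(u⟦(1:ℤ)⟧')) ∈ distTriang C := by
    refine isomorphic_distinguished _ (rot_of_distTriang _ hT) _ ?_
    refine Triangle.isoMk _ _ (Iso.refl _)
      (Iso.mk (-𝟙 Z) (-𝟙 Z) (by exact (Preadditive.neg_comp_neg _ _).trans (comp_id _))
        (by exact (Preadditive.neg_comp_neg _ _).trans (comp_id _))) (Iso.refl _) ?_ ?_ ?_
    · show (-v) ≫ (-𝟙 Z) = 𝟙 Y ≫ v; simp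
    · show (-w) ≫ 𝟙 _ = (-𝟙 Z) ≫ w; simp
    · show (-(u⟦(1:ℤ)⟧')) ≫ (𝟙 Y)⟦(1:ℤ)⟧' = 𝟙 _ ≫ (-(u⟦(1:ℤ)⟧')); simp
  have hD := my_biprodTriangle_distinguished u' v' w' (-v) (-w) (-(u⟦(1:ℤ)⟧')) hT' hT''
  have hconeMor : ∀ h0 : Z ⟶ Z', mappingCone (Triangle.mk u v w) (Triangle.mk u' v' w') f g h0 =
      Triangle.mk
        (biprod.desc (biprod.lift u' 0) (biprod.lift g (-v)))
        (biprod.desc (biprod.lift v' 0) (biprod.lift h0 (-w)))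
        (biprod.desc (biprod.lift w' 0) (biprod.lift (f⟦(1:ℤ)⟧') (-(u⟦(1:ℤ)⟧'))) ≫
          ((shiftFunctor C (1:ℤ)).mapBiprod X' Y).inv) := fun _ => rfl
  constructor
  · rintro ⟨k, hk1, hk2⟩
    have huv' : u' ≫ v' = 0 := comp_distTriang_mor_zero₁₂ _ hT'
    have hwu : w ≫ u⟦(1:ℤ)⟧' = 0 := comp_distTriang_mor_zero₃₁ _ hT
    refine ⟨by rw [← hk2, assoc, huv', comp_zero],
      by rw [← hk1, Functor.map_comp, ← assoc, hwu, zero_comp], ?_⟩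
    show mappingCone (Triangle.mk u v w) (Triangle.mk u' v' w') f g 0 ∈ distTriang C
    erw [hconeMor 0]
    refine isomorphic_distinguished _ hD _ ?_
    have hinl : biprod.lift (𝟙 X') (0 : X' ⟶ Y) = biprod.inl := by
      apply biprod.hom_ext <;> simp
    have hlku : u ≫ biprod.lift k (𝟙 Y) = biprod.lift f u := by
      apply biprod.hom_ext <;> simp [hk1]
    refine Triangle.isoMk _ _
      (Iso.mk (X := X' ⊞ Y) (Y := X' ⊞ Y)
        (biprod.desc (biprod.lift (𝟙 X') (0 : X' ⟶ Y)) (biprod.lift k (𝟙 Y)))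
        (biprod.desc (biprod.lift (𝟙 X') (0 : X' ⟶ Y)) (biprod.lift (-k) (𝟙 Y)))
        (by apply biprod.hom_ext' <;> apply biprod.hom_ext <;> simp)
        (by apply biprod.hom_ext' <;> apply biprod.hom_ext <;> simp))
      (Iso.refl _) (Iso.refl _) ?_ ?_ ?_
    · show biprod.desc (biprod.lift u' 0) (biprod.lift g (-v)) ≫ 𝟙 (Y' ⊞ Z) =
        biprod.desc (biprod.lift (𝟙 X') (0 : X' ⟶ Y)) (biprod.lift k (𝟙 Y)) ≫ biprod.map u' (-v)
      rw [comp_id]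
      apply biprod.hom_ext' <;> apply biprod.hom_ext <;> simp [hk2]
    · show biprod.desc (biprod.lift v' 0) (biprod.lift (0 : Z ⟶ Z') (-w)) ≫
        𝟙 (Z' ⊞ X⟦(1:ℤ)⟧) = 𝟙 (Y' ⊞ Z) ≫ biprod.map v' (-w)
      rw [comp_id, id_comp]
      apply biprod.hom_ext' <;> apply biprod.hom_ext <;> simp
    · show (biprod.desc (biprod.lift w' 0) (biprod.lift (f⟦(1:ℤ)⟧') (-(u⟦(1:ℤ)⟧'))) ≫
          ((shiftFunctor C (1:ℤ)).mapBiprod X' Y).inv) ≫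
          (biprod.desc (biprod.lift (𝟙 X') (0 : X' ⟶ Y)) (biprod.lift k (𝟙 Y)))⟦(1:ℤ)⟧' =
          𝟙 (Z' ⊞ X⟦(1:ℤ)⟧) ≫ (biprod.map w' (-(u⟦(1:ℤ)⟧')) ≫
          ((shiftFunctor C (1:ℤ)).mapBiprod X' Y).inv)
      rw [id_comp, assoc]
      have hBA : ((shiftFunctor C (1:ℤ)).mapBiprod X' Y).inv ≫
          (biprod.desc (biprod.lift (𝟙 X') (0 : X' ⟶ Y)) (biprod.lift k (𝟙 Y)))⟦(1:ℤ)⟧' =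
          biprod.desc ((shiftFunctor C (1:ℤ)).map biprod.inl)
            ((shiftFunctor C (1:ℤ)).map (biprod.lift k (𝟙 Y))) := by
        rw [Functor.mapBiprod_inv]
        apply biprod.hom_ext' <;> simp [← Functor.map_comp, hinl]
      rw [hBA]
      apply biprod.hom_ext'
      · simp [Functor.mapBiprod_inv]
        erw [biprod.inl_map_assoc, biprod.inl_desc]
      · simp only [biprod.inr_desc_assoc, biprod.inr_map_assoc, biprod.lift_desc,
          Functor.mapBiprod_inv, Preadditive.neg_comp, Preadditive.comp_neg,
          ← Functor.map_comp, biprod.inr_desc]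
        rw [hlku, ← Functor.map_neg, ← Functor.map_add, ← Functor.map_neg]
        congr 1
        apply biprod.hom_ext <;> simp
  · rintro ⟨hv, hw, hGood⟩
    have hC : Triangle.mk
        (biprod.desc (biprod.lift u' 0) (biprod.lift g (-v)))
        (biprod.desc (biprod.lift v' 0) (biprod.lift (0 : Z ⟶ Z') (-w)))
        (biprod.desc (biprod.lift w' 0) (biprod.lift (f⟦(1:ℤ)⟧') (-(u⟦(1:ℤ)⟧'))) ≫
          ((shiftFunctor C (1:ℤ)).mapBiprod X' Y).inv) ∈ distTriang C := by
      have := hGood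
      rw [show IsGood (Triangle.mk u v w) (Triangle.mk u' v' w') f g 0 =
        (mappingCone (Triangle.mk u v w) (Triangle.mk u' v' w') f g 0 ∈ distTriang C) from rfl] at this
      erw [hconeMor 0] at this
      exact this
    -- compare the rotations of the two distinguished triangles via TR3
    obtain ⟨c, hc₁, hc₂⟩ : ∃ c : (X' ⊞ Y)⟦(1:ℤ)⟧ ⟶ (X' ⊞ Y)⟦(1:ℤ)⟧,
        (biprod.map w' (-(u⟦(1:ℤ)⟧')) ≫ ((shiftFunctor C (1:ℤ)).mapBiprod X' Y).inv) ≫ c =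
          (𝟙 (Z' ⊞ X⟦(1:ℤ)⟧)) ≫ (biprod.desc (biprod.lift w' 0)
            (biprod.lift (f⟦(1:ℤ)⟧') (-(u⟦(1:ℤ)⟧'))) ≫
            ((shiftFunctor C (1:ℤ)).mapBiprod X' Y).inv) ∧
        (-((biprod.map u' (-v))⟦(1:ℤ)⟧')) ≫ ((𝟙 (Y' ⊞ Z))⟦(1:ℤ)⟧') =
          c ≫ (-((biprod.desc (biprod.lift u' 0) (biprod.lift g (-v)))⟦(1:ℤ)⟧')) :=
      complete_distinguished_triangle_morphism _ _
        (rot_of_distTriang _ hD) (rot_of_distTriang _ hC) (𝟙 _) (𝟙 _)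
        (by
          show biprod.map v' (-w) ≫ 𝟙 (Z' ⊞ X⟦(1:ℤ)⟧) = 𝟙 (Y' ⊞ Z) ≫
            biprod.desc (biprod.lift v' 0) (biprod.lift (0 : Z ⟶ Z') (-w))
          rw [comp_id, id_comp]
          apply biprod.hom_ext' <;> apply biprod.hom_ext <;> simp)
    rw [id_comp] at hc₁
    -- clean up hc₂
    have hc₂' : ((biprod.map u' (-v))⟦(1:ℤ)⟧') =
        c ≫ ((biprod.desc (biprod.lift u' 0) (biprod.lift g (-v)))⟦(1:ℤ)⟧') := by
      have := hc₂
      rw [CategoryTheory.Functor.map_id, comp_id, Preadditive.comp_neg, neg_inj] at this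
      exact this
    have hFif : (shiftFunctor C (1:ℤ)).map (biprod.inl : X' ⟶ X' ⊞ Y) ≫
        (shiftFunctor C (1:ℤ)).map (biprod.fst : X' ⊞ Y ⟶ X') = 𝟙 _ := by
      rw [← Functor.map_comp, biprod.inl_fst, CategoryTheory.Functor.map_id]
    have hFis : (shiftFunctor C (1:ℤ)).map (biprod.inl : X' ⟶ X' ⊞ Y) ≫
        (shiftFunctor C (1:ℤ)).map (biprod.snd : X' ⊞ Y ⟶ Y) = 0 := by
      rw [← Functor.map_comp, biprod.inl_snd, Functor.map_zero]
    have hFrf : (shiftFunctor C (1:ℤ)).map (biprod.inr : Y ⟶ X' ⊞ Y) ≫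
        (shiftFunctor C (1:ℤ)).map (biprod.fst : X' ⊞ Y ⟶ X') = 0 := by
      rw [← Functor.map_comp, biprod.inr_fst, Functor.map_zero]
    have hFrs : (shiftFunctor C (1:ℤ)).map (biprod.inr : Y ⟶ X' ⊞ Y) ≫
        (shiftFunctor C (1:ℤ)).map (biprod.snd : X' ⊞ Y ⟶ Y) = 𝟙 _ := by
      rw [← Functor.map_comp, biprod.inr_snd, CategoryTheory.Functor.map_id]
    have h1 := (biprod.inr ≫= hc₁) =≫ (shiftFunctor C (1:ℤ)).map biprod.fst
    simp only [assoc, biprod.inr_map_assoc, Functor.mapBiprod_inv, biprod.inr_desc,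
      biprod.inr_desc_assoc, biprod.lift_desc, Preadditive.neg_comp, Preadditive.comp_neg,
      Preadditive.add_comp, hFif, hFis, hFrf, hFrs,
      comp_id, comp_zero, add_zero, zero_add, neg_neg, neg_inj] at h1

    have E1 : (u⟦(1:ℤ)⟧') ≫ (shiftFunctor C (1:ℤ)).map biprod.inr ≫ c ≫
        (shiftFunctor C (1:ℤ)).map biprod.fst = -(f⟦(1:ℤ)⟧') := by
      have h1' := congrArg (fun t => -t) h1
      simpa using h1'
    have h2 := (biprod.inr ≫= hc₁) =≫ (shiftFunctor C (1:ℤ)).map biprod.snd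
    simp only [assoc, biprod.inr_map_assoc, Functor.mapBiprod_inv, biprod.inr_desc,
      biprod.inr_desc_assoc, biprod.lift_desc, Preadditive.neg_comp, Preadditive.comp_neg,
      Preadditive.add_comp, hFif, hFis, hFrf, hFrs,
      comp_id, comp_zero, add_zero, zero_add, neg_neg, neg_inj] at h2
    have E2 : (u⟦(1:ℤ)⟧') ≫ (shiftFunctor C (1:ℤ)).map biprod.inr ≫ c ≫
        (shiftFunctor C (1:ℤ)).map biprod.snd = u⟦(1:ℤ)⟧' := h2
    have hFrf2 : (shiftFunctor C (1:ℤ)).map (biprod.inr : Z ⟶ Y' ⊞ Z) ≫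
        (shiftFunctor C (1:ℤ)).map (biprod.fst : Y' ⊞ Z ⟶ Y') = 0 := by
      rw [← Functor.map_comp, biprod.inr_fst, Functor.map_zero]
    have hFrs2 : (shiftFunctor C (1:ℤ)).map (biprod.inr : Z ⟶ Y' ⊞ Z) ≫
        (shiftFunctor C (1:ℤ)).map (biprod.snd : Y' ⊞ Z ⟶ Z) = 𝟙 _ := by
      rw [← Functor.map_comp, biprod.inr_snd, CategoryTheory.Functor.map_id]
    have hL3 : (shiftFunctor C (1:ℤ)).map (biprod.inr : Y ⟶ X' ⊞ Y) ≫
        (shiftFunctor C (1:ℤ)).map (biprod.map u' (-v)) =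
        -((v⟦(1:ℤ)⟧') ≫ (shiftFunctor C (1:ℤ)).map (biprod.inr : Z ⟶ Y' ⊞ Z)) := by
      rw [← Functor.map_comp, biprod.inr_map, Preadditive.neg_comp, Functor.map_neg,
        Functor.map_comp]
    have hM1fst : (biprod.desc (biprod.lift u' 0) (biprod.lift g (-v))) ≫
        (biprod.fst : Y' ⊞ Z ⟶ Y') =
        (biprod.fst : X' ⊞ Y ⟶ X') ≫ u' + (biprod.snd : X' ⊞ Y ⟶ Y) ≫ g := by
      apply biprod.hom_ext' <;> simp
    have hM1snd : (biprod.desc (biprod.lift u' 0) (biprod.lift g (-v))) ≫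
        (biprod.snd : Y' ⊞ Z ⟶ Z) = (biprod.snd : X' ⊞ Y ⟶ Y) ≫ (-v) := by
      apply biprod.hom_ext' <;> simp
    have hR3 : (shiftFunctor C (1:ℤ)).map
          (biprod.desc (biprod.lift u' 0) (biprod.lift g (-v))) ≫
        (shiftFunctor C (1:ℤ)).map (biprod.fst : Y' ⊞ Z ⟶ Y') =
        (shiftFunctor C (1:ℤ)).map (biprod.fst : X' ⊞ Y ⟶ X') ≫ (u'⟦(1:ℤ)⟧') +
        (shiftFunctor C (1:ℤ)).map (biprod.snd : X' ⊞ Y ⟶ Y) ≫ (g⟦(1:ℤ)⟧') := by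
      rw [← Functor.map_comp, hM1fst, Functor.map_add, Functor.map_comp, Functor.map_comp]
    have hR4 : (shiftFunctor C (1:ℤ)).map
          (biprod.desc (biprod.lift u' 0) (biprod.lift g (-v))) ≫
        (shiftFunctor C (1:ℤ)).map (biprod.snd : Y' ⊞ Z ⟶ Z) =
        -((shiftFunctor C (1:ℤ)).map (biprod.snd : X' ⊞ Y ⟶ Y) ≫ (v⟦(1:ℤ)⟧')) := by
      rw [← Functor.map_comp, hM1snd, Functor.map_comp, Functor.map_neg,
        Preadditive.comp_neg]
    have h3 := ((shiftFunctor C (1:ℤ)).map biprod.inr ≫= hc₂') =≫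
        (shiftFunctor C (1:ℤ)).map (biprod.fst : Y' ⊞ Z ⟶ Y')
    rw [← assoc, hL3, assoc, assoc] at h3
    rw [hR3] at h3
    rw [Preadditive.neg_comp, assoc, hFrf2, comp_zero, neg_zero] at h3
    have E3 : ((shiftFunctor C (1:ℤ)).map biprod.inr ≫ c ≫
          (shiftFunctor C (1:ℤ)).map biprod.fst) ≫ (u'⟦(1:ℤ)⟧') +
        ((shiftFunctor C (1:ℤ)).map biprod.inr ≫ c ≫
          (shiftFunctor C (1:ℤ)).map biprod.snd) ≫ (g⟦(1:ℤ)⟧') = 0 := by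
      simpa only [Preadditive.comp_add, assoc] using h3.symm
    have h4 := ((shiftFunctor C (1:ℤ)).map biprod.inr ≫= hc₂') =≫
        (shiftFunctor C (1:ℤ)).map (biprod.snd : Y' ⊞ Z ⟶ Z)
    rw [← assoc, hL3, assoc, assoc] at h4
    rw [hR4] at h4
    rw [Preadditive.neg_comp, assoc, hFrs2, comp_id] at h4
    have E4 : ((shiftFunctor C (1:ℤ)).map biprod.inr ≫ c ≫
          (shiftFunctor C (1:ℤ)).map biprod.snd) ≫ (v⟦(1:ℤ)⟧') = v⟦(1:ℤ)⟧' := by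
      have := congrArg (fun t => -t) h4
      simpa [Preadditive.comp_neg, assoc] using this.symm
    obtain ⟨e₀, he₀⟩ : ∃ e : Y⟦(1:ℤ)⟧ ⟶ X⟦(1:ℤ)⟧,
        𝟙 (Y⟦(1:ℤ)⟧) - ((shiftFunctor C (1:ℤ)).map biprod.inr ≫ c ≫
          (shiftFunctor C (1:ℤ)).map biprod.snd) = e ≫ (-(u⟦(1:ℤ)⟧')) :=
      Triangle.coyoneda_exact₁ _ (rot_of_distTriang _ hT) _ (by
        show (𝟙 (Y⟦(1:ℤ)⟧) - ((shiftFunctor C (1:ℤ)).map biprod.inr ≫ c ≫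
          (shiftFunctor C (1:ℤ)).map biprod.snd)) ≫ (v⟦(1:ℤ)⟧') = 0
        rw [Preadditive.sub_comp, id_comp, E4, sub_self])
    have he'' : 𝟙 (Y⟦(1:ℤ)⟧) - ((shiftFunctor C (1:ℤ)).map biprod.inr ≫ c ≫
        (shiftFunctor C (1:ℤ)).map biprod.snd) = (-e₀) ≫ (u⟦(1:ℤ)⟧') := by
      rw [he₀]; simp
    have hε : ((u⟦(1:ℤ)⟧') ≫ (-e₀)) ≫ (u⟦(1:ℤ)⟧') = 0 := by
      rw [assoc, ← he'', Preadditive.comp_sub, comp_id, E2, sub_self]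
    obtain ⟨εz, hεz⟩ : ∃ z : X⟦(1:ℤ)⟧ ⟶ Z, (u⟦(1:ℤ)⟧') ≫ (-e₀) = z ≫ w :=
      Triangle.coyoneda_exact₁ _ hT _ hε
    refine ⟨(shiftFunctor C (1:ℤ)).preimage
      (-((shiftFunctor C (1:ℤ)).map biprod.inr ≫ c ≫
          (shiftFunctor C (1:ℤ)).map biprod.fst) + (-e₀) ≫ (f⟦(1:ℤ)⟧')), ?_, ?_⟩
    · apply (shiftFunctor C (1:ℤ)).map_injective
      rw [Functor.map_comp, Functor.map_preimage]
      rw [Preadditive.comp_add, Preadditive.comp_neg, E1, neg_neg, ← assoc, hεz, assoc,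
        hw, comp_zero, add_zero]
    · apply (shiftFunctor C (1:ℤ)).map_injective
      rw [Functor.map_comp, Functor.map_preimage]
      have hfu : (f⟦(1:ℤ)⟧') ≫ (u'⟦(1:ℤ)⟧') = (u⟦(1:ℤ)⟧') ≫ (g⟦(1:ℤ)⟧') := by
        rw [← Functor.map_comp, ← Functor.map_comp, hcomm]
      rw [Preadditive.add_comp, Preadditive.neg_comp, assoc (-e₀), hfu, ← assoc (-e₀),
        ← he'', Preadditive.sub_comp, id_comp, eq_neg_of_add_eq_zero_left E3]
      abel
end

section
/- Let u: X→Y, u': X'→Y', f: X→X', g: Y→Y' be morphisms in T with g∘u = u'∘f, and let X →u Y →v Z →w ΣX and X' →u' Y' →v' Z' →w' ΣX' be distinguished triangles. If every morphism Z → Z' is zero, then there exists a morphism k: Y→X' with k∘u = f and u'∘k = g. -/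
open CategoryTheory Category Limits Pretriangulated

universe v u

variable {C : Type u} [Category.{v} C] [Preadditive C] [HasZeroObject C]
  [HasShift C ℤ] [∀ n : ℤ, (shiftFunctor C n).Additive] [Pretriangulated C]
  [IsTriangulated C] [HasBinaryBiproducts C]

theorem stmt_1 {X Y Z X' Y' Z' : C}
    (u : X ⟶ Y) (v : Y ⟶ Z) (w : Z ⟶ X⟦(1 : ℤ)⟧)
    (u' : X' ⟶ Y') (v' : Y' ⟶ Z') (w' : Z' ⟶ X'⟦(1 : ℤ)⟧)
    (hT : Triangle.mk u v w ∈ distTriang C)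
    (hT' : Triangle.mk u' v' w' ∈ distTriang C)
    (f : X ⟶ X') (g : Y ⟶ Y') (hcomm : u ≫ g = f ≫ u')
    (hzero : ∀ φ : Z ⟶ Z', φ = 0) :
    ∃ k : Y ⟶ X', u ≫ k = f ∧ k ≫ u' = g := by
  -- Complete (f,g) to a morphism of triangles; the third map Z ⟶ Z' is zero.
  obtain ⟨h, hh1, hh2⟩ := complete_distinguished_triangle_morphism
    (Triangle.mk u v w) (Triangle.mk u' v' w') hT hT' f g hcomm
  change v ≫ h = g ≫ v' at hh1
  have hgv' : g ≫ v' = 0 := by rw [← hh1, hzero h]; exact comp_zero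
  obtain ⟨k₀, hk₀⟩ := Triangle.coyoneda_exact₂ _ hT' g hgv'
  change Y ⟶ X' at k₀
  change g = k₀ ≫ u' at hk₀
  -- the defect φ := f - u ≫ k₀ composes to zero with u'
  have hφ : (f - u ≫ k₀) ≫ u' = 0 := by
    simp only [Preadditive.sub_comp, assoc, ← hk₀, hcomm, sub_self]
  -- factor φ through the inverse rotation of T'
  obtain ⟨θ, hθ⟩ := Triangle.coyoneda_exact₂ _ (inv_rot_of_distTriang _ hT') _ hφ
  change X ⟶ (shiftFunctor C (-1 : ℤ)).obj Z' at θ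
  have hδu' : ((Triangle.mk u' v' w').invRotate.mor₁) ≫ u' = 0 :=
    comp_distTriang_mor_zero₁₂ _ (inv_rot_of_distTriang _ hT')
  -- lift θ along u using that Hom(Z⟦-1⟧, Z'⟦-1⟧) ≅ Hom(Z, Z') = 0
  have hδ₀θ : ((Triangle.mk u v w).invRotate.mor₁) ≫ θ = 0 := by
    obtain ⟨ρ, hρ⟩ := (shiftFunctor C (-1 : ℤ)).map_surjective
      (((Triangle.mk u v w).invRotate.mor₁) ≫ θ)
    refine hρ.symm.trans ?_
    rw [hzero ρ]; exact Functor.map_zero _ _ _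
  obtain ⟨ψ, hψ⟩ := Triangle.yoneda_exact₂ _ (inv_rot_of_distTriang _ hT) θ hδ₀θ
  change Y ⟶ (shiftFunctor C (-1 : ℤ)).obj Z' at ψ
  change θ = u ≫ ψ at hψ
  let δ : (shiftFunctor C (-1 : ℤ)).obj Z' ⟶ X' := (Triangle.mk u' v' w').invRotate.mor₁
  change (f - u ≫ k₀ : X ⟶ X') = θ ≫ δ at hθ
  change (δ : _ ⟶ X') ≫ u' = 0 at hδu'
  refine ⟨k₀ + ψ ≫ δ, ?_, ?_⟩
  · have h2 : u ≫ (ψ ≫ δ) = f - u ≫ k₀ := by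
      rw [← assoc, ← hψ, ← hθ]
    rw [Preadditive.comp_add, h2]
    abel
  · rw [Preadditive.add_comp, assoc, hδu', comp_zero, add_zero, ← hk₀]
end

section
/- Let (f,g,h) be a Verdier good map of triangles from a distinguished triangle X →u Y →v Z →w ΣX to a distinguished triangle X' →u' Y' →v' Z' →w' ΣX', and let θ: ΣX → Y' be any morphism. Then (f, g, h + v'∘θ∘w) is also a map of triangles between the same two distinguished triangles, and it is Verdier good. -/
open CategoryTheory Category Limits Pretriangulated

universe v u

variable {C : Type u} [Category.{v} C] [Preadditive C] [HasZeroObject C]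
  [HasShift C ℤ] [∀ n : ℤ, (shiftFunctor C n).Additive] [Pretriangulated C]
  [IsTriangulated C] [HasBinaryBiproducts C]

theorem stmt_2 {X Y Z X' Y' Z' : C}
    (u : X ⟶ Y) (v : Y ⟶ Z) (w : Z ⟶ X⟦(1 : ℤ)⟧)
    (u' : X' ⟶ Y') (v' : Y' ⟶ Z') (w' : Z' ⟶ X'⟦(1 : ℤ)⟧)
    (hT : Triangle.mk u v w ∈ distTriang C)
    (hT' : Triangle.mk u' v' w' ∈ distTriang C)
    (f : X ⟶ X') (g : Y ⟶ Y') (h : Z ⟶ Z')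
    (hmap : IsTriMap (Triangle.mk u v w) (Triangle.mk u' v' w') f g h)
    (hV : IsVerdierGood (Triangle.mk u v w) (Triangle.mk u' v' w') f g h)
    (θ : X⟦(1 : ℤ)⟧ ⟶ Y') :
    IsTriMap (Triangle.mk u v w) (Triangle.mk u' v' w') f g (h + w ≫ θ ≫ v') ∧
      IsVerdierGood (Triangle.mk u v w) (Triangle.mk u' v' w') f g (h + w ≫ θ ≫ v') := by
  obtain ⟨h1, h2, h3⟩ := hmap
  simp only [Triangle.mk_mor₁, Triangle.mk_mor₂, Triangle.mk_mor₃] at h1 h2 h3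
  have hvw : v ≫ w = 0 := comp_distTriang_mor_zero₂₃ _ hT
  have hvw' : v' ≫ w' = 0 := comp_distTriang_mor_zero₂₃ _ hT'
  constructor
  · refine ⟨h1, ?_, ?_⟩
    · show v ≫ (h + w ≫ θ ≫ v') = g ≫ v'
      simp [Preadditive.comp_add, reassoc_of% hvw, h2]
      exact h2
    · show w ≫ f⟦(1 : ℤ)⟧' = (h + w ≫ θ ≫ v') ≫ w'
      simp [Preadditive.add_comp, hvw', h3]
      exact h3
  · obtain ⟨A, Y'', X'', vt, wt, g', g'', f', f'', α₁, β₁, α₂, β₂,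
      hug, hg, hf, ⟨o11, o12, o13, o14, o15⟩, ⟨o21, o22, o23, o24, o25⟩, hh⟩ := hV
    change Y' ⟶ A at vt
    change A ⟶ X⟦(1 : ℤ)⟧ at wt
    change Y' ⟶ Y'' at g'
    change Y'' ⟶ Y⟦(1 : ℤ)⟧ at g''
    change X' ⟶ X'' at f'
    change X'' ⟶ X⟦(1 : ℤ)⟧ at f''
    change Z ⟶ A at α₁
    change A ⟶ Z' at β₂
    replace o21 : f' ≫ α₂ = u' ≫ vt := o21
    replace o22 : α₂ ≫ wt = f'' := o22
    replace o23 : vt ≫ β₂ = v' := o23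
    replace o24 : β₂ ≫ w' = wt ≫ f⟦(1 : ℤ)⟧' := o24
    replace o25 : Triangle.mk α₂ β₂ (w' ≫ f'⟦(1 : ℤ)⟧') ∈ distTriang C := o25
    replace o12 : α₁ ≫ wt = w := o12
    replace hh : h = α₁ ≫ β₂ := hh
    replace hug : Triangle.mk (u ≫ g) vt wt ∈ distTriang C := hug
    simp only [Triangle.mk_mor₁, Triangle.mk_mor₂, Triangle.mk_mor₃] at hug o11 o12 o14 o15 o21 o23 o24 o25
    have hvtwt : vt ≫ wt = 0 := comp_distTriang_mor_zero₂₃ _ hug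
    set x : A ⟶ A := wt ≫ θ ≫ vt with hxdef
    refine ⟨A, Y'', X'', vt, wt, g', g'', f', f'', α₁, β₁,
      α₂ ≫ (𝟙 A - x), (𝟙 A + x) ≫ β₂, hug, hg, hf, ⟨o11, o12, o13, o14, o15⟩,
      ⟨?_, ?_, ?_, ?_, ?_⟩, ?_⟩
    · show f' ≫ (α₂ ≫ (𝟙 A - x)) = u' ≫ vt
      simp [hxdef, Preadditive.comp_sub, reassoc_of% o21, reassoc_of% hvtwt, o21]
    · show (α₂ ≫ (𝟙 A - x)) ≫ wt = f''
      simp [hxdef, Preadditive.sub_comp, hvtwt, o22]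
    · show vt ≫ ((𝟙 A + x) ≫ β₂) = v'
      simp [hxdef, Preadditive.comp_add, reassoc_of% hvtwt, o23]
    · show ((𝟙 A + x) ≫ β₂) ≫ w' = wt ≫ f⟦(1 : ℤ)⟧'
      simp [hxdef, Preadditive.add_comp, o24, reassoc_of% hvtwt]
    · show Triangle.mk (α₂ ≫ (𝟙 A - x)) ((𝟙 A + x) ≫ β₂) (w' ≫ f'⟦(1 : ℤ)⟧') ∈ distTriang C
      refine isomorphic_distinguished _ o25 _ ?_
      refine Triangle.isoMk _ _ (Iso.refl _)
        ⟨𝟙 A + x, 𝟙 A - x, ?_, ?_⟩ (Iso.refl _) ?_ ?_ ?_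
      · show (𝟙 A + x) ≫ (𝟙 A - x) = 𝟙 A
        simp [hxdef, hvtwt, reassoc_of% hvtwt, Preadditive.comp_sub,
          Preadditive.sub_comp, Preadditive.comp_add, Preadditive.add_comp]
        try abel
      · show (𝟙 A - x) ≫ (𝟙 A + x) = 𝟙 A
        simp [hxdef, hvtwt, reassoc_of% hvtwt, Preadditive.comp_sub,
          Preadditive.sub_comp, Preadditive.comp_add, Preadditive.add_comp]
        try abel
      · show (α₂ ≫ (𝟙 A - x)) ≫ (𝟙 A + x) = 𝟙 X'' ≫ α₂
        simp [hxdef, hvtwt, reassoc_of% hvtwt, Preadditive.comp_sub,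
          Preadditive.sub_comp, Preadditive.comp_add, Preadditive.add_comp]
        try abel
      · show ((𝟙 A + x) ≫ β₂) ≫ 𝟙 Z' = (𝟙 A + x) ≫ β₂
        simp [hxdef, hvtwt, reassoc_of% hvtwt, Preadditive.comp_sub,
          Preadditive.sub_comp, Preadditive.comp_add, Preadditive.add_comp]
        try abel
      · show (w' ≫ f'⟦(1 : ℤ)⟧') ≫ (𝟙 X'')⟦(1 : ℤ)⟧' = 𝟙 Z' ≫ w' ≫ f'⟦(1 : ℤ)⟧'
        simp [hxdef, hvtwt, reassoc_of% hvtwt, Preadditive.comp_sub,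
          Preadditive.sub_comp, Preadditive.comp_add, Preadditive.add_comp]
        try abel
    · show h + w ≫ θ ≫ v' = α₁ ≫ ((𝟙 A + x) ≫ β₂)
      rw [hh]
      simp [hxdef, Preadditive.comp_add, Preadditive.add_comp, o23,
        reassoc_of% o12]
end

section
/- Let φ: X→Y, ψ: Y→Z, f: X→X', g: Y→Y', h: Z→Z', φ': X'→Y', ψ': Y'→Z' be morphisms with g∘φ = φ'∘f and h∘ψ = ψ'∘g. Suppose the left square (with maps φ, f, g, φ') is homotopy cartesian with differential ∂_L: Y'→ΣX, i.e., X →(f,φ)ᵀ X'⊕Y →[φ', −g] Y' →∂_L ΣX is a distinguished triangle, and the right square (with maps ψ, g, h, ψ') is homotopy cartesian with differential ∂_R: Z'→ΣY, i.e., Y →(g,ψ)ᵀ Y'⊕Z →[ψ', −h] Z' →∂_R ΣY is a distinguished triangle. Then there exists ∂_P: Z'→ΣX such that the pasted rectangle (with maps ψ∘φ, f, h, ψ'∘φ') is homotopy cartesian with differential ∂_P, i.e., X →(f, ψ∘φ)ᵀ X'⊕Z →[ψ'∘φ', −h] Z' →∂_P ΣX is a distinguished triangle, and moreover (Σφ)∘∂_P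 = ∂_R and ∂_P∘ψ' = ∂_L. -/
open CategoryTheory Category Limits Pretriangulated

universe v u

variable {C : Type u} [Category.{v} C] [Preadditive C] [HasZeroObject C]
  [HasShift C ℤ] [∀ n : ℤ, (shiftFunctor C n).Additive] [Pretriangulated C]
  [IsTriangulated C] [HasBinaryBiproducts C]

open ZeroObject

def negIso (X : C) : X ≅ X :=
  ⟨-𝟙 X, -𝟙 X, by simp, by simp⟩

set_option linter.unusedSectionVars false in
lemma sum_dist (T₁ T₂ : Triangle C) (h₁ : T₁ ∈ distTriang C) (h₂ : T₂ ∈ distTriang C) :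
    Triangle.mk (biprod.map T₁.mor₁ T₂.mor₁) (biprod.map T₁.mor₂ T₂.mor₂)
      (biprod.desc (T₁.mor₃ ≫ (biprod.inl : T₁.obj₁ ⟶ T₁.obj₁ ⊞ T₂.obj₁)⟦(1:ℤ)⟧')
        (T₂.mor₃ ≫ (biprod.inr : T₂.obj₁ ⟶ T₁.obj₁ ⊞ T₂.obj₁)⟦(1:ℤ)⟧')) ∈ distTriang C := by
  classical
  set F : WalkingPair → Triangle C := fun j => match j with | .left => T₁ | .right => T₂ with hF
  have hFd : ∀ j, F j ∈ distTriang C := by rintro (_|_) <;> assumption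
  have hP := productTriangle_distinguished F hFd
  refine isomorphic_distinguished _ hP _ ?_
  refine Triangle.isoMk _ _
    (⟨Pi.lift (fun j => match j with | .left => biprod.fst | .right => biprod.snd),
      biprod.lift (Pi.π _ WalkingPair.left) (Pi.π _ WalkingPair.right), ?_, ?_⟩ :
        T₁.obj₁ ⊞ T₂.obj₁ ≅ ∏ᶜ (fun j => (F j).obj₁))
    (⟨Pi.lift (fun j => match j with | .left => biprod.fst | .right => biprod.snd),
      biprod.lift (Pi.π _ WalkingPair.left) (Pi.π _ WalkingPair.right), ?_, ?_⟩ :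
        T₁.obj₂ ⊞ T₂.obj₂ ≅ ∏ᶜ (fun j => (F j).obj₂))
    (⟨Pi.lift (fun j => match j with | .left => biprod.fst | .right => biprod.snd),
      biprod.lift (Pi.π _ WalkingPair.left) (Pi.π _ WalkingPair.right), ?_, ?_⟩ :
        T₁.obj₃ ⊞ T₂.obj₃ ≅ ∏ᶜ (fun j => (F j).obj₃))
    ?_ ?_ ?_
  · apply biprod.hom_ext <;> simp
  · apply Pi.hom_ext; rintro (_|_)
    · simp; exact biprod.lift_fst _ _
    · simp; exact biprod.lift_snd _ _
  · apply biprod.hom_ext <;> simp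
  · apply Pi.hom_ext; rintro (_|_)
    · simp; exact biprod.lift_fst _ _
    · simp; exact biprod.lift_snd _ _
  · apply biprod.hom_ext <;> simp
  · apply Pi.hom_ext; rintro (_|_)
    · simp; exact biprod.lift_fst _ _
    · simp; exact biprod.lift_snd _ _
  · -- comm₁
    dsimp
    delta productTriangle Triangle.mk
    apply Pi.hom_ext; rintro (_|_) <;> simp [F]
  · -- comm₂
    dsimp
    delta productTriangle Triangle.mk
    apply Pi.hom_ext; rintro (_|_) <;> simp [F]
  · -- comm₃
    dsimp
    delta productTriangle Triangle.mk
    rw [← cancel_mono (piComparison (shiftFunctor C (1:ℤ)) (fun j => (F j).obj₁))]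
    rw [assoc, assoc, assoc, IsIso.inv_hom_id, comp_id]
    apply biprod.hom_ext' <;> apply Pi.hom_ext <;> rintro (_|_) <;>
      simp [← Functor.map_comp] <;> rfl

theorem stmt_11 {X Y Z X' Y' Z' : C}
    (φ : X ⟶ Y) (ψ : Y ⟶ Z) (f : X ⟶ X') (g : Y ⟶ Y') (h : Z ⟶ Z')
    (φ' : X' ⟶ Y') (ψ' : Y' ⟶ Z')
    (hc₁ : φ ≫ g = f ≫ φ') (hc₂ : ψ ≫ h = g ≫ ψ')
    (dL : Y' ⟶ X⟦(1 : ℤ)⟧) (dR : Z' ⟶ Y⟦(1 : ℤ)⟧)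
    (hL : Triangle.mk (biprod.lift f φ) (biprod.desc φ' (-g)) dL ∈ distTriang C)
    (hR : Triangle.mk (biprod.lift g ψ) (biprod.desc ψ' (-h)) dR ∈ distTriang C) :
    ∃ dP : Z' ⟶ X⟦(1 : ℤ)⟧,
      (Triangle.mk (biprod.lift f (φ ≫ ψ)) (biprod.desc (φ' ≫ ψ') (-h)) dP ∈
        distTriang C) ∧
      dP ≫ φ⟦(1 : ℤ)⟧' = dR ∧ ψ' ≫ dP = dL := by
  set u : X ⟶ X' ⊞ Y := biprod.lift f φ with hu
  set vL : X' ⊞ Y ⟶ Y' := biprod.desc φ' (-g) with hvL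
  set u13 : X ⟶ X' ⊞ Z := biprod.lift f (φ ≫ ψ) with hu13
  set b13 : X' ⊞ Z ⟶ Z' := biprod.desc (φ' ≫ ψ') (-h) with hb13
  set w : X' ⊞ Y ⟶ X' ⊞ Z := biprod.map (𝟙 X') ψ with hw
  set s1 : X' ⊞ Y ⟶ (X' ⊞ Z) ⊞ Y' := biprod.lift w vL with hs1
  obtain ⟨V, pV, qV, hV⟩ := distinguished_cocone_triangle s1
  have comm : s1 ≫ (biprod.snd : (X' ⊞ Z) ⊞ Y' ⟶ Y') = vL := by simp [hs1]
  have h23 : Triangle.mk (biprod.snd : (X' ⊞ Z) ⊞ Y' ⟶ Y') (0 : Y' ⟶ (X' ⊞ Z)⟦(1:ℤ)⟧)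
      (-(biprod.inl : (X' ⊞ Z) ⟶ (X' ⊞ Z) ⊞ Y')⟦(1:ℤ)⟧') ∈ distTriang C :=
    rot_of_distTriang _ (binaryBiproductTriangle_distinguished (X' ⊞ Z) Y')
  have h13 : Triangle.mk vL dL (-(u)⟦(1:ℤ)⟧') ∈ distTriang C :=
    rot_of_distTriang _ hL
  let O := Triangulated.someOctahedron comm hV h23 h13
  -- facts from the octahedron
  have Oc1 : pV ≫ O.m₁ = (biprod.snd : (X' ⊞ Z) ⊞ Y' ⟶ Y') ≫ dL := O.comm₁
  have Oc2 : O.m₁ ≫ (-(u)⟦(1:ℤ)⟧') = qV := O.comm₂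
  have Oc4 : (-(u)⟦(1:ℤ)⟧') ≫ s1⟦(1:ℤ)⟧' =
      O.m₃ ≫ (-(biprod.inl : (X' ⊞ Z) ⟶ (X' ⊞ Z) ⊞ Y')⟦(1:ℤ)⟧') := O.comm₄
  have Omem := O.mem
  -- u ≫ s1 = u13 ≫ inl
  have key0 : u ≫ s1 = u13 ≫ (biprod.inl : (X' ⊞ Z) ⟶ (X' ⊞ Z) ⊞ Y') := by
    apply biprod.hom_ext
    · apply biprod.hom_ext <;> simp [hs1, hu, hw, hu13]
    · simp [hs1, hu, hvL, hc₁]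
  -- O.m₃ = u13⟦1⟧'
  have nthree : O.m₃ = u13⟦(1:ℤ)⟧' := by
    have h4 := Oc4
    rw [Preadditive.neg_comp, ← Functor.map_comp, key0, Functor.map_comp,
      Preadditive.comp_neg, neg_inj] at h4
    have e2 := h4.symm =≫ (biprod.fst : (X' ⊞ Z) ⊞ Y' ⟶ (X' ⊞ Z))⟦(1:ℤ)⟧'
    simpa [← Functor.map_comp] using e2
  -- The triangle T0 := (u13, inl ≫ pV, -O.m₁) is distinguished
  have hT0 : Triangle.mk u13 ((biprod.inl : (X' ⊞ Z) ⟶ (X' ⊞ Z) ⊞ Y') ≫ pV) (-O.m₁) ∈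
      distTriang C := by
    rw [Pretriangulated.rotate_distinguished_triangle,
      Pretriangulated.rotate_distinguished_triangle]
    refine isomorphic_distinguished _ Omem _ ?_
    refine Triangle.isoMk _ _ (negIso V) (Iso.refl _) (negIso _) ?_ ?_ ?_
    · dsimp [Triangle.rotate, negIso]
      delta Triangle.mk
      simp
    · dsimp [Triangle.rotate, negIso]
      delta Triangle.mk
      simp [nthree]
    · dsimp [Triangle.rotate, negIso]
      delta Triangle.mk
      simp
      exact neg_neg _
  -- The padded right-hand triangle
  set a : Y ⟶ Y' ⊞ Z := biprod.lift g ψ with ha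
  set b : Y' ⊞ Z ⟶ Z' := biprod.desc ψ' (-h) with hb
  have hTpad : Triangle.mk (biprod.map a (𝟙 X'))
      (biprod.desc b (0 : X' ⟶ Z'))
      (dR ≫ (biprod.inl : Y ⟶ Y ⊞ X')⟦(1:ℤ)⟧') ∈ distTriang C := by
    have hS := sum_dist _ _ hR (contractible_distinguished X')
    refine isomorphic_distinguished _ hS _ ?_
    refine Triangle.isoMk _ _ (Iso.refl _) (Iso.refl _)
      (Iso.mk (biprod.lift (𝟙 Z') 0) biprod.fst (by delta Triangle.mk; simp)
        (by
          apply biprod.hom_ext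
          · delta Triangle.mk; simp
          · exact (isZero_zero C).eq_of_tgt _ _)) ?_ ?_ ?_
    · dsimp; delta Triangle.mk contractibleTriangle; simp
    · dsimp
      delta Triangle.mk contractibleTriangle
      apply biprod.hom_ext' <;> apply biprod.hom_ext
      · simp
      · exact (isZero_zero C).eq_of_tgt _ _
      · simp
      · exact (isZero_zero C).eq_of_tgt _ _
    · dsimp; delta Triangle.mk contractibleTriangle; simp
  -- the comparison isomorphism E with explicit inverse Fm
  set EX : X' ⟶ (Y' ⊞ Z) ⊞ X' := biprod.lift (biprod.lift φ' 0) (𝟙 X') with hEX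
  set EZ : Z ⟶ (Y' ⊞ Z) ⊞ X' := biprod.lift biprod.inr 0 with hEZ
  set EY : Y' ⟶ (Y' ⊞ Z) ⊞ X' := biprod.lift (-biprod.inl) 0 with hEY
  set E : (X' ⊞ Z) ⊞ Y' ⟶ (Y' ⊞ Z) ⊞ X' := biprod.desc (biprod.desc EX EZ) EY with hE
  set Fm : (Y' ⊞ Z) ⊞ X' ⟶ (X' ⊞ Z) ⊞ Y' :=
    biprod.desc (biprod.desc (biprod.lift 0 (-𝟙 Y')) (biprod.lift biprod.inr 0))
      (biprod.lift biprod.inl φ') with hF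
  have hEF : E ≫ Fm = 𝟙 _ := by
    apply biprod.hom_ext' <;> [skip; skip] <;> first
      | (apply biprod.hom_ext' <;> apply biprod.hom_ext <;>
          simp [hE, hF, hEX, hEZ, hEY] <;> (apply biprod.hom_ext <;> simp))
      | (apply biprod.hom_ext <;> simp [hE, hF, hEX, hEZ, hEY] <;>
          (apply biprod.hom_ext <;> simp))
  have hFE : Fm ≫ E = 𝟙 _ := by
    apply biprod.hom_ext' <;> [skip; skip] <;> first
      | (apply biprod.hom_ext' <;> apply biprod.hom_ext <;>
          simp [hE, hF, hEX, hEZ, hEY] <;> (apply biprod.hom_ext <;> simp))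
      | (apply biprod.hom_ext <;> simp [hE, hF, hEX, hEZ, hEY] <;>
          (apply biprod.hom_ext <;> simp))
  have hEiso : IsIso E := ⟨Fm, hEF, hFE⟩
  -- the commuting square
  have Esq : s1 ≫ E = (biprod.braiding X' Y).hom ≫ biprod.map a (𝟙 X') := by
    apply biprod.hom_ext' <;> apply biprod.hom_ext <;>
      simp [hs1, hw, hvL, hE, hEX, hEZ, hEY, ha, biprod.braiding] <;>
      (apply biprod.hom_ext <;> simp)
  -- complete to a morphism of triangles and get the iso Θ
  obtain ⟨Θ, hΘ₂, hΘ₃⟩ := complete_distinguished_triangle_morphism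
    (Triangle.mk s1 pV qV)
    (Triangle.mk (biprod.map a (𝟙 X')) (biprod.desc b (0 : X' ⟶ Z'))
      (dR ≫ (biprod.inl : Y ⟶ Y ⊞ X')⟦(1:ℤ)⟧'))
    hV hTpad (biprod.braiding X' Y).hom E Esq
  delta Triangle.mk at Θ hΘ₂ hΘ₃
  have hΘiso : IsIso Θ := by
    refine isIso₃_of_isIso₁₂
      ({ hom₁ := (biprod.braiding X' Y).hom, hom₂ := E, hom₃ := Θ,
         comm₁ := Esq, comm₂ := hΘ₂, comm₃ := hΘ₃ } :
        Triangle.mk s1 pV qV ⟶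
          Triangle.mk (biprod.map a (𝟙 X')) (biprod.desc b (0 : X' ⟶ Z'))
            (dR ≫ (biprod.inl : Y ⟶ Y ⊞ X')⟦(1:ℤ)⟧'))
      hV hTpad ?_ ?_
    · exact (inferInstance : IsIso (biprod.braiding X' Y).hom)
    · exact hEiso
  -- unpack the data of the completed morphism
  have R1 : (biprod.inl : (X' ⊞ Z) ⟶ (X' ⊞ Z) ⊞ Y') ≫ pV ≫ Θ = b13 := by
    rw [hΘ₂]
    apply biprod.hom_ext' <;>
      simp [hE, hEX, hEZ, hb, hb13]
  have R2 : (biprod.inr : Y' ⟶ (X' ⊞ Z) ⊞ Y') ≫ pV ≫ Θ = -ψ' := by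
    rw [hΘ₂]
    simp [hE, hEY, hb]
  have R3 : (-O.m₁) ≫ φ⟦(1:ℤ)⟧' = Θ ≫ dR := by
    have qVeq : qV = (-O.m₁) ≫ u⟦(1:ℤ)⟧' := by
      rw [Preadditive.neg_comp, ← Preadditive.comp_neg]
      exact Oc2.symm
    have e := hΘ₃
    rw [qVeq, assoc, ← Functor.map_comp] at e
    have hub : u ≫ (biprod.braiding X' Y).hom = biprod.lift φ f := by
      apply biprod.hom_ext <;> simp [hu, biprod.braiding]
    rw [hub] at e
    have e2 := e =≫ (biprod.fst : Y ⊞ X' ⟶ Y)⟦(1:ℤ)⟧'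
    simpa [← Functor.map_comp] using e2
  have B2 : (-((biprod.inr : Y' ⟶ (X' ⊞ Z) ⊞ Y') ≫ pV)) ≫ (-O.m₁) = dL := by
    rw [Preadditive.neg_comp, Preadditive.comp_neg, neg_neg, assoc, Oc1]
    simp
  -- conclusion
  refine ⟨inv Θ ≫ (-O.m₁), ?_, ?_, ?_⟩
  · refine isomorphic_distinguished _ hT0 _ ?_
    refine Triangle.isoMk _ _ (Iso.refl _) (Iso.refl _) (asIso Θ).symm ?_ ?_ ?_
    · dsimp; delta Triangle.mk; simp
    · dsimp
      delta Triangle.mk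
      rw [IsIso.comp_inv_eq, id_comp, assoc]
      exact R1.symm
    · dsimp
      delta Triangle.mk
      simp
  · rw [assoc, R3, IsIso.inv_hom_id_assoc]
  · have hψ : ψ' = (-((biprod.inr : Y' ⟶ (X' ⊞ Z) ⊞ Y') ≫ pV)) ≫ Θ := by
      rw [Preadditive.neg_comp, assoc, R2, neg_neg]
    rw [hψ, assoc, IsIso.hom_inv_id_assoc]
    exact B2
end

section
/- Let (1_X, g, h) be a map of triangles from a distinguished triangle X →u Y →v Z →w ΣX to a distinguished triangle X →u' Y' →v' Z' →w' ΣX whose first component is the identity of X (so that u' = g∘u). Then (1_X, g, h) is Verdier good if and only if it extends to an octahedron, i.e., if and only if there exist a distinguished triangle Y →g Y' →g' Y'' →g'' ΣY and a morphism β: Z'→Y'' such that the pair (h: Z→Z', β: Z'→Y'') is an octahedron for the composite g∘u with respect to the triangles (u,v,w), (g,g',g''), and (u',v',w'). -/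
open CategoryTheory Category Limits Pretriangulated

universe v u

variable {C : Type u} [Category.{v} C] [Preadditive C] [HasZeroObject C]
  [HasShift C ℤ] [∀ n : ℤ, (shiftFunctor C n).Additive] [Pretriangulated C]
  [IsTriangulated C] [HasBinaryBiproducts C]

theorem stmt_12 {X Y Z Y' Z' : C}
    (u : X ⟶ Y) (v : Y ⟶ Z) (w : Z ⟶ X⟦(1 : ℤ)⟧)
    (u' : X ⟶ Y') (v' : Y' ⟶ Z') (w' : Z' ⟶ X⟦(1 : ℤ)⟧)
    (hT : Triangle.mk u v w ∈ distTriang C)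
    (hT' : Triangle.mk u' v' w' ∈ distTriang C)
    (g : Y ⟶ Y') (h : Z ⟶ Z')
    (hmap : IsTriMap (Triangle.mk u v w) (Triangle.mk u' v' w') (𝟙 X) g h) :
    IsVerdierGood (Triangle.mk u v w) (Triangle.mk u' v' w') (𝟙 X) g h ↔
      ∃ (Y'' : C) (g' : Y' ⟶ Y'') (g'' : Y'' ⟶ Y⟦(1 : ℤ)⟧) (β : Z' ⟶ Y''),
        (Triangle.mk g g' g'' ∈ distTriang C) ∧
        IsOctahedron u g v w g' g'' v' w' h β := by
  obtain ⟨h1, h2, h3⟩ := hmap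
  dsimp only [Triangle.mk] at h1 h2 h3
  rw [id_comp] at h1
  constructor
  · rintro ⟨A, Y'', X'', vt, wt, g', g'', f', f'', α₁, β₁, α₂, β₂, hTA, hTg, hTf,
      ⟨o11, o12, o13, o14, o15⟩, ⟨o21, o22, o23, o24, o25⟩, hh⟩
    dsimp only [Triangle.mk] at *
    change Y' ⟶ A at vt
    change A ⟶ X⟦(1 : ℤ)⟧ at wt
    change Y' ⟶ Y'' at g'
    change Y'' ⟶ Y⟦(1 : ℤ)⟧ at g''
    change Z ⟶ A at α₁
    change A ⟶ Z' at β₂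
    have hz : IsZero X'' := Triangle.isZero₃_of_isIso₁ _ hTf (by dsimp; infer_instance)
    have hiso : IsIso β₂ := (Triangle.isZero₁_iff_isIso₂ _ o25).1 hz
    have hwt : β₂ ≫ w' = wt := by
      exact o24.trans ((congrArg (wt ≫ ·) (CategoryTheory.Functor.map_id _ _)).trans (comp_id _))
    refine ⟨Y'', g', g'', inv β₂ ≫ β₁, hTg, h2, by simpa using h3.symm, ?_, ?_, ?_⟩
    · rw [← o23, assoc, IsIso.hom_inv_id_assoc]
      exact o13
    · rw [assoc, o14, ← hwt]
      simp
    · refine isomorphic_distinguished _ o15 _ ?_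
      refine Triangle.isoMk _ _ (Iso.refl _) (asIso β₂).symm (Iso.refl _) ?_ ?_ ?_
      · dsimp
        dsimp only [Triangle.mk]
        rw [id_comp, hh, assoc, IsIso.hom_inv_id, comp_id]
      · dsimp
        dsimp only [Triangle.mk]
        simp
      · dsimp
        dsimp only [Triangle.mk]
        simp
  · rintro ⟨Y'', g', g'', β, hTg, hoct⟩
    have h0 : u' ≫ v' = 0 := comp_distTriang_mor_zero₁₂ _ hT'
    open ZeroObject in
    refine ⟨Z', Y'', 0, v', w', g', g'', 0, 0, h, β, 0, 𝟙 Z', ?_, hTg, ?_, hoct,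
      ⟨?_, ?_, ?_, ?_, ?_⟩, (comp_id h).symm⟩
    · dsimp only [Triangle.mk]
      rw [h1]
      exact hT'
    · exact contractible_distinguished X
    · dsimp only [Triangle.mk]
      exact zero_comp.trans h0.symm
    · exact zero_comp
    · exact comp_id _
    · exact (id_comp _).trans ((comp_id _).symm.trans (congrArg (w' ≫ ·) (CategoryTheory.Functor.map_id _ _).symm))
    · have hz : w' ≫ (0 : X ⟶ (0 : C))⟦(1 : ℤ)⟧' = 0 := by simp
      dsimp only [Triangle.mk]
      exact (congrArg (fun t => Triangle.mk (0 : (0 : C) ⟶ Z') (𝟙 Z') t ∈ distTriang C) hz).mpr (contractible_distinguished₁ Z')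
end
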